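/- For every ε, δ in the open interval (0,1), if the natural number n satisfies n > log(δ)/log(1-ε) - 1, then the probability (over n+1 i.i.d. samples from μ, each labeled by the target threshold, fed to the learning algorithm that returns the maximum positively-labeled example, or 0 if none) that the returned hypothesis h satisfies Error(h) ≤ ε is at least 1 - δ. -/

import Mathlib

open MeasureTheory

noncomputable def Error (μ : Measure NNReal) (target h : NNReal) : ENNReal :=
  μ {x | (x ≤ h) ≠ (x ≤ target)}

noncomputable def labelSample (target : NNReal) {n : ℕ} (S : Fin (n + 1) → NNReal) :
    Fin (n + 1) → NNReal × Bool :=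
  fun i => (S i, decide (S i ≤ target))

noncomputable def chooseHyp {n : ℕ} (S : Fin (n + 1) → NNReal × Bool) : NNReal :=
  Finset.univ.sup fun i => if (S i).2 then (S i).1 else 0

/-!
The learner never overshoots: its hypothesis `h` lies in `[0, target]`, with error
`μ (h, target]`. Let `s` be the infimum of the `t` with `μ (t, target] ≤ ε`. By continuity of `μ`
from below, `μ (s, target] ≤ ε`, so every `h ≥ s` is good; if `s = 0` we are done. Otherwise, by
continuity from above, `μ [s, target] ≥ ε`, and the hypothesis is good as soon as one sample falls
into `[s, target]`. All `n + 1` samples miss it with probability at most `(1 - ε) ^ (n + 1) ≤ δ`.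
-/

open Set Filter Topology
open scoped ENNReal NNReal

section Threshold

variable {α : Type*} [ConditionallyCompleteLinearOrderBot α] [TopologicalSpace α]
  [OrderTopology α] [FirstCountableTopology α] [MeasurableSpace α]

/-- The left end `s` of the shortest interval `[s, b]` of `μ`-mass at least `ε`. -/
noncomputable def errorThreshold (μ : Measure α) (b : α) (ε : ℝ≥0∞) : α :=
  sInf {t | μ (Ioc t b) ≤ ε}

variable (μ : Measure α) (b : α) (ε : ℝ≥0∞)

theorem measure_Ioc_errorThreshold_le : μ (Ioc (errorThreshold μ b ε) b) ≤ ε := by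
  have hne : {t | μ (Ioc t b) ≤ ε}.Nonempty := ⟨b, by simp⟩
  obtain ⟨u, hu_anti, hu_lim, hu_mem⟩ := exists_seq_tendsto_sInf hne (OrderBot.bddBelow _)
  have hunion : Ioc (errorThreshold μ b ε) b = ⋃ k, Ioc (u k) b := by
    ext x
    simp only [mem_Ioc, mem_iUnion]
    constructor
    · rintro ⟨hsx, hxb⟩
      obtain ⟨k, hk⟩ := (hu_lim.eventually_lt_const hsx).exists
      exact ⟨k, hk, hxb⟩
    · rintro ⟨k, hk, hxb⟩
      exact ⟨(csInf_le' (hu_mem k)).trans_lt hk, hxb⟩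
  rw [hunion, Monotone.measure_iUnion fun i j hij => Ioc_subset_Ioc_left (hu_anti hij)]
  exact iSup_le hu_mem

theorem measure_Ioc_le_of_errorThreshold_le {t : α} (ht : errorThreshold μ b ε ≤ t) :
    μ (Ioc t b) ≤ ε :=
  (measure_mono (Ioc_subset_Ioc_left ht)).trans (measure_Ioc_errorThreshold_le μ b ε)

theorem le_measure_Icc_errorThreshold [DenselyOrdered α] [OpensMeasurableSpace α]
    [IsFiniteMeasure μ] (hs : ⊥ < errorThreshold μ b ε) :
    ε ≤ μ (Icc (errorThreshold μ b ε) b) := by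
  set s := errorThreshold μ b ε
  obtain ⟨v, hv_mono, hv_mem, hv_lim⟩ := exists_seq_strictMono_tendsto' hs
  have hinter : Icc s b = ⋂ k, Ioc (v k) b := by
    ext x
    simp only [mem_Icc, mem_iInter, mem_Ioc]
    constructor
    · rintro ⟨hsx, hxb⟩ k
      exact ⟨(hv_mem k).2.trans_le hsx, hxb⟩
    · intro hx
      refine ⟨not_lt.mp fun hxs => ?_, (hx 0).2⟩
      obtain ⟨k, hk⟩ := (hv_lim.eventually_const_lt hxs).exists
      exact (hx k).1.not_gt hk
  rw [hinter, Antitone.measure_iInter (fun i j hij => Ioc_subset_Ioc_left (hv_mono.monotone hij))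
    (fun k => measurableSet_Ioc.nullMeasurableSet) ⟨0, measure_ne_top μ _⟩]
  refine le_iInf fun k => le_of_lt (not_le.mp fun hk => ?_)
  exact (csInf_le' (s := {t | μ (Ioc t b) ≤ ε}) hk).not_gt (hv_mem k).2

end Threshold

theorem one_sub_pow_le_measure_pi_exists_mem {ι Ω : Type*} [Fintype ι] [MeasurableSpace Ω]
    (μ : Measure Ω) [IsProbabilityMeasure μ] {I : Set Ω} (hI : MeasurableSet I) {p : ℝ≥0∞}
    (hp : p ≤ μ I) :
    1 - (1 - p) ^ Fintype.card ι ≤ Measure.pi (fun _ : ι => μ) {S | ∃ i, S i ∈ I} := by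
  have hmiss : {S : ι → Ω | ∃ i, S i ∈ I} = (univ.pi fun _ => Iᶜ)ᶜ := by
    ext S
    simp
  rw [hmiss, prob_compl_eq_one_sub (MeasurableSet.univ_pi fun _ => hI.compl), Measure.pi_pi,
    Finset.prod_const, Finset.card_univ, prob_compl_eq_one_sub hI]
  gcongr

theorem pow_le_of_log_div_log_lt {x δ : ℝ} (hx0 : 0 < x) (hx1 : x < 1) (hδ : 0 < δ) {m : ℕ}
    (hm : Real.log δ / Real.log x < m) : x ^ m ≤ δ := by
  have hlog : Real.log x < 0 := Real.log_neg hx0 hx1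
  have : Real.log (x ^ m) < Real.log δ := by
    rw [Real.log_pow]
    linarith [(div_lt_iff_of_neg hlog).mp hm]
  exact ((Real.log_lt_log_iff (pow_pos hx0 m) hδ).mp this).le

theorem error_eq_measure_Ioc (μ : Measure ℝ≥0) {target h : ℝ≥0} (hh : h ≤ target) :
    Error μ target h = μ (Ioc h target) := by
  unfold Error
  congr 1
  ext x
  simp only [mem_ofPred_eq, mem_Ioc, ne_eq, eq_iff_iff]
  constructor
  · intro hne
    refine ⟨not_le.mp fun hxh => hne (iff_of_true hxh (hxh.trans hh)), by_contra fun hxt => ?_⟩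
    exact hne (iff_of_false (fun hxh => hxt (hxh.trans hh)) hxt)
  · rintro ⟨hhx, hxt⟩ hiff
    exact hhx.not_ge (hiff.mpr hxt)

theorem error_le_of_errorThreshold_le (μ : Measure ℝ≥0) {target h : ℝ≥0} {ε : ℝ≥0∞}
    (hsh : errorThreshold μ target ε ≤ h) (ht : h ≤ target) : Error μ target h ≤ ε := by
  rw [error_eq_measure_Ioc μ ht]
  exact measure_Ioc_le_of_errorThreshold_le μ target ε hsh

section Learner

variable {n : ℕ} (target : ℝ≥0) (S : Fin (n + 1) → ℝ≥0)

theorem chooseHyp_labelSample :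
    chooseHyp (labelSample target S) =
      Finset.univ.sup fun i => if S i ≤ target then S i else 0 := by
  simp [chooseHyp, labelSample]

theorem chooseHyp_labelSample_le : chooseHyp (labelSample target S) ≤ target := by
  rw [chooseHyp_labelSample]
  refine Finset.sup_le fun i _ => ?_
  split_ifs with hi
  exacts [hi, zero_le]

theorem le_chooseHyp_labelSample {i : Fin (n + 1)} (hi : S i ≤ target) :
    S i ≤ chooseHyp (labelSample target S) := by
  rw [chooseHyp_labelSample]
  simpa [hi] using
    Finset.le_sup (f := fun i => if S i ≤ target then S i else 0) (Finset.mem_univ i)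

theorem measurable_chooseHyp_labelSample :
    Measurable fun S : Fin (n + 1) → ℝ≥0 => chooseHyp (labelSample target S) := by
  have hcoord (i : Fin (n + 1)) :
      Measurable fun S : Fin (n + 1) → ℝ≥0 => if S i ≤ target then S i else 0 :=
    Measurable.ite (measurable_pi_apply i measurableSet_Iic) (measurable_pi_apply i)
      measurable_const
  convert Finset.measurable_sup' Finset.univ_nonempty fun i _ => hcoord i using 1
  ext S
  rw [Finset.sup'_apply, Finset.sup'_eq_sup, chooseHyp_labelSample]

end Learner

theorem stump_choose_PAC_general (μ : Measure NNReal) [IsProbabilityMeasure μ] (target : NNReal)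
    (ε δ : NNReal) (hε0 : 0 < ε) (hε1 : ε < 1) (hδ0 : 0 < δ)
    (n : ℕ) (hn : (n : ℝ) > Real.log δ / Real.log (1 - (ε : ℝ)) - 1) :
    ((Measure.pi fun _ : Fin (n + 1) => μ).map
        (fun S => chooseHyp (labelSample target S)))
        {h : NNReal | Error μ target h ≤ (ε : ENNReal)} ≥ 1 - (δ : ENNReal) := by
  set s := errorThreshold μ target ε
  have hreal : (1 - (ε : ℝ)) ^ (n + 1) ≤ δ :=
    pow_le_of_log_div_log_lt (by simpa using hε1) (by simpa using hε0) (by simpa using hδ0)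
      (by push_cast; linarith)
  have hpow : (1 - (ε : ℝ≥0∞)) ^ (n + 1) ≤ δ := by
    rwa [← ENNReal.coe_one, ← ENNReal.coe_sub, ← ENNReal.coe_pow, ENNReal.coe_le_coe,
      ← NNReal.coe_le_coe, NNReal.coe_pow, NNReal.coe_sub hε1.le, NNReal.coe_one]
  refine le_trans ?_
    (Measure.le_map_apply (measurable_chooseHyp_labelSample target).aemeasurable _)
  have hgood : ∀ S : Fin (n + 1) → ℝ≥0, s ≤ chooseHyp (labelSample target S) →
      Error μ target (chooseHyp (labelSample target S)) ≤ ε := fun S hS =>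
    error_le_of_errorThreshold_le μ hS (chooseHyp_labelSample_le target S)
  rcases eq_bot_or_bot_lt s with hs | hs
  · calc 1 - (δ : ℝ≥0∞) ≤ Measure.pi (fun _ : Fin (n + 1) => μ) univ := by simp
      _ ≤ _ := measure_mono fun S _ => hgood S (hs ▸ bot_le)
  · calc 1 - (δ : ℝ≥0∞) ≤ 1 - (1 - ε) ^ (n + 1) := tsub_le_tsub_left hpow 1
      _ ≤ Measure.pi (fun _ : Fin (n + 1) => μ) {S | ∃ i, S i ∈ Icc s target} := by
        simpa only [Fintype.card_fin] using
          one_sub_pow_le_measure_pi_exists_mem (ι := Fin (n + 1)) μ measurableSet_Icc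
            (le_measure_Icc_errorThreshold μ target ε hs)
      _ ≤ _ := measure_mono fun S ⟨i, hsi, hit⟩ =>
        hgood S (hsi.trans (le_chooseHyp_labelSample target S hit))

theorem stump_choose_PAC (μ : Measure NNReal) [IsProbabilityMeasure μ] (target : NNReal)
    (ε δ : NNReal) (hε0 : 0 < ε) (hε1 : ε < 1) (hδ0 : 0 < δ) (hδ1 : δ < 1)
    (n : ℕ) (hn : (n : ℝ) > Real.log δ / Real.log (1 - (ε : ℝ)) - 1) :
    ((Measure.pi fun _ : Fin (n + 1) => μ).map
        (fun S => chooseHyp (labelSample target S)))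
        {h : NNReal | Error μ target h ≤ (ε : ENNReal)} ≥ 1 - (δ : ENNReal) :=
  stump_choose_PAC_general μ target ε δ hε0 hε1 hδ0 n hn
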